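/- For every integer n ≥ 1, every t > 0 and every f ∈ L²(ℝ), the n-th power K(t/n)^n of the operator K(t/n) = V_{t/n} ∘ P_{t/n} ∘ V_{t/n} is the integral operator with kernel K_n(t,·,·): for almost every x ∈ ℝ, (K(t/n)^n f)(x) = ∫_ℝ K_n(t,x,y)·f(y) dy. -/

import Mathlib

noncomputable section
open MeasureTheory Real

/-- `w_n(t) = sqrt(1 + t²/(4n²))`. -/
def wn (n : ℕ) (t : ℝ) : ℝ := Real.sqrt (1 + t ^ 2 / (4 * (n : ℝ) ^ 2))

/-- `a_n(t) = (1 + (t/n)·w_n(t) + t²/(2n²))^n`. -/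
def an (n : ℕ) (t : ℝ) : ℝ := (1 + (t / n) * wn n t + t ^ 2 / (2 * (n : ℝ) ^ 2)) ^ n

/-- `b_n(t) = (1 − (t/n)·w_n(t) + t²/(2n²))^n`. -/
def bn (n : ℕ) (t : ℝ) : ℝ := (1 - (t / n) * wn n t + t ^ 2 / (2 * (n : ℝ) ^ 2)) ^ n

/-- `a'_n(t) = (1 + (t/n)·w_n(t) + t²/(2n²))^(n-1)`. -/
def an' (n : ℕ) (t : ℝ) : ℝ := (1 + (t / n) * wn n t + t ^ 2 / (2 * (n : ℝ) ^ 2)) ^ (n - 1)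

/-- `b'_n(t) = (1 − (t/n)·w_n(t) + t²/(2n²))^(n-1)`. -/
def bn' (n : ℕ) (t : ℝ) : ℝ := (1 - (t / n) * wn n t + t ^ 2 / (2 * (n : ℝ) ^ 2)) ^ (n - 1)

/-- The kernel `K_n(t,x,y)`. -/
def Kn (n : ℕ) (t x y : ℝ) : ℝ :=
  Real.pi ^ (-(1 : ℝ) / 2) * Real.sqrt (wn n t / (an n t - bn n t)) *
    Real.exp ((2 * wn n t / (an n t - bn n t)) * x * y) *
    Real.exp ((-t / (4 * n) -
        ((n : ℝ) / (2 * t)) * (1 - (an' n t - bn' n t) / (an n t - bn n t))) * (x ^ 2 + y ^ 2))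

/-- The complex Hilbert space `L²(ℝ)`. -/
abbrev L2 := Lp ℂ 2 (volume : Measure ℝ)

/-! Conjugating the heat kernel by the Gaussian multipliers gives a Gaussian kernel which,
with `cosh θ = 1 + τ²/2`, is Mehler's kernel of the harmonic oscillator of frequency
`w = √(1 + τ²/4)` (note `sinh θ = τ w`). Composing two Gaussian kernels is a Gaussian integral in
the middle variable (Fubini applies because a Gaussian times an `L²` function is integrable), and
the hyperbolic addition formulas show that Mehler's kernels compose as a semigroup in `θ`.
Hence `K(τ)^n` has Mehler's kernel at `nθ`, and `e^{±θ} = 1 ± τ w + τ²/2` turns it into `K_n`. -/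

lemma exp_neg_mul_sq_add_mul_eq {a : ℝ} (ha : 0 < a) (b y : ℝ) :
    exp (-a * y ^ 2 + b * y) = exp (b ^ 2 / (4 * a)) * exp (-a * (y - b / (2 * a)) ^ 2) := by
  rw [← exp_add]; congr 1; field_simp; ring

lemma integrable_exp_neg_mul_sq_add_mul {a : ℝ} (ha : 0 < a) (b : ℝ) :
    Integrable fun y : ℝ => exp (-a * y ^ 2 + b * y) := by
  simp_rw [exp_neg_mul_sq_add_mul_eq ha]
  exact ((integrable_exp_neg_mul_sq ha).comp_sub_right _).const_mul _

lemma integral_exp_neg_mul_sq_add_mul {a : ℝ} (ha : 0 < a) (b : ℝ) :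
    ∫ y : ℝ, exp (-a * y ^ 2 + b * y) = √(π / a) * exp (b ^ 2 / (4 * a)) := by
  simp_rw [exp_neg_mul_sq_add_mul_eq ha]
  rw [integral_const_mul, integral_sub_right_eq_self (fun y => exp (-a * y ^ 2)),
    integral_gaussian, mul_comm]

lemma memLp_exp_neg_mul_sq_add_mul {a : ℝ} (ha : 0 < a) (b : ℝ) :
    MemLp (fun y : ℝ => exp (-a * y ^ 2 + b * y)) 2 := by
  refine (memLp_two_iff_integrable_sq_norm (by fun_prop)).2 ?_
  convert integrable_exp_neg_mul_sq_add_mul (mul_pos two_pos ha) (2 * b) using 2 with y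
  rw [norm_of_nonneg (exp_pos _).le, ← exp_nat_mul]
  ring_nf

def gaussianKernel (c a d b x y : ℝ) : ℝ := c * exp (-a * x ^ 2 - d * y ^ 2 + b * x * y)

lemma abs_gaussianKernel (c a d b x y : ℝ) :
    |gaussianKernel c a d b x y| = gaussianKernel |c| a d b x y := by
  rw [gaussianKernel, gaussianKernel, abs_mul, abs_of_pos (exp_pos _)]

lemma integrable_gaussianKernel_mul_norm {d : ℝ} (hd : 0 < d) (c a b x : ℝ) {f : ℝ → ℂ}
    (hf : MemLp f 2) : Integrable fun z => gaussianKernel c a d b x z * ‖f z‖ := by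
  have hE := (memLp_exp_neg_mul_sq_add_mul hd (b * x)).integrable_mul hf.norm
  convert hE.const_mul (c * exp (-a * x ^ 2)) using 2 with z
  simp only [gaussianKernel, Pi.mul_apply]
  rw [show -a * x ^ 2 - d * z ^ 2 + b * x * z = -a * x ^ 2 + (-d * z ^ 2 + b * x * z) by ring,
    exp_add]
  ring

lemma gaussianKernel_mul_gaussianKernel (c₁ a₁ d₁ b₁ c₂ a₂ d₂ b₂ x y z : ℝ) :
    gaussianKernel c₁ a₁ d₁ b₁ x y * gaussianKernel c₂ a₂ d₂ b₂ y z =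
      c₁ * c₂ * exp (-a₁ * x ^ 2 - d₂ * z ^ 2) *
        exp (-(d₁ + a₂) * y ^ 2 + (b₁ * x + b₂ * z) * y) := by
  have h : -a₁ * x ^ 2 - d₁ * y ^ 2 + b₁ * x * y + (-a₂ * y ^ 2 - d₂ * z ^ 2 + b₂ * y * z) =
      -a₁ * x ^ 2 - d₂ * z ^ 2 + (-(d₁ + a₂) * y ^ 2 + (b₁ * x + b₂ * z) * y) := by ring
  rw [gaussianKernel, gaussianKernel, mul_mul_mul_comm, ← exp_add, h, exp_add]
  ring

lemma integral_gaussianKernel_mul_gaussianKernel {d₁ a₂ : ℝ} (hS : 0 < d₁ + a₂)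
    (c₁ a₁ b₁ c₂ d₂ b₂ x z : ℝ) :
    ∫ y, gaussianKernel c₁ a₁ d₁ b₁ x y * gaussianKernel c₂ a₂ d₂ b₂ y z =
      gaussianKernel (c₁ * c₂ * √(π / (d₁ + a₂))) (a₁ - b₁ ^ 2 / (4 * (d₁ + a₂)))
        (d₂ - b₂ ^ 2 / (4 * (d₁ + a₂))) (b₁ * b₂ / (2 * (d₁ + a₂))) x z := by
  simp_rw [gaussianKernel_mul_gaussianKernel]
  have h : -(a₁ - b₁ ^ 2 / (4 * (d₁ + a₂))) * x ^ 2 - (d₂ - b₂ ^ 2 / (4 * (d₁ + a₂))) * z ^ 2 +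
      b₁ * b₂ / (2 * (d₁ + a₂)) * x * z =
      -a₁ * x ^ 2 - d₂ * z ^ 2 + (b₁ * x + b₂ * z) ^ 2 / (4 * (d₁ + a₂)) := by
    field_simp
    ring
  rw [integral_const_mul, integral_exp_neg_mul_sq_add_mul hS, gaussianKernel, h, exp_add]
  ring

lemma integral_gaussianKernel_comp {d₁ a₂ d₂ b₂ : ℝ} (hS : 0 < d₁ + a₂)
    (hd : 0 < d₂ - b₂ ^ 2 / (4 * (d₁ + a₂))) (c₁ a₁ b₁ c₂ x : ℝ) {f : ℝ → ℂ} (hf : MemLp f 2) :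
    ∫ y, (gaussianKernel c₁ a₁ d₁ b₁ x y : ℂ) * ∫ z, (gaussianKernel c₂ a₂ d₂ b₂ y z : ℂ) * f z =
      ∫ z, (gaussianKernel (c₁ * c₂ * √(π / (d₁ + a₂))) (a₁ - b₁ ^ 2 / (4 * (d₁ + a₂)))
        (d₂ - b₂ ^ 2 / (4 * (d₁ + a₂))) (b₁ * b₂ / (2 * (d₁ + a₂))) x z : ℂ) * f z := by
  set F : ℝ × ℝ → ℂ := fun p =>
    (gaussianKernel c₁ a₁ d₁ b₁ x p.1 * gaussianKernel c₂ a₂ d₂ b₂ p.1 p.2 : ℝ) * f p.2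
  have hF : Integrable F (volume.prod volume) := by
    have hmeas : AEStronglyMeasurable F (volume.prod volume) :=
      .mul (by unfold gaussianKernel; fun_prop) hf.1.comp_snd
    refine (integrable_prod_iff' hmeas).2 ⟨ae_of_all _ fun z => ?_, ?_⟩
    · simp_rw [F, gaussianKernel_mul_gaussianKernel]
      exact (((integrable_exp_neg_mul_sq_add_mul hS _).const_mul _).ofReal).mul_const _
    · convert integrable_gaussianKernel_mul_norm hd (|c₁| * |c₂| * √(π / (d₁ + a₂)))
        (a₁ - b₁ ^ 2 / (4 * (d₁ + a₂))) (b₁ * b₂ / (2 * (d₁ + a₂))) x hf using 2 with z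
      simp_rw [F, norm_mul, Complex.norm_real, Real.norm_eq_abs, abs_mul, abs_gaussianKernel]
      rw [integral_mul_const, integral_gaussianKernel_mul_gaussianKernel hS]
  calc _ = ∫ y, ∫ z, F (y, z) := by
        refine integral_congr_ae (ae_of_all _ fun y => ?_)
        simp only [F, ← integral_const_mul]
        push_cast
        simp_rw [mul_assoc]
    _ = ∫ z, ∫ y, F (y, z) := integral_integral_swap hF
    _ = _ := by
        refine integral_congr_ae (ae_of_all _ fun z => ?_)
        simp only [F]
        rw [integral_mul_const, integral_complex_ofReal,
          integral_gaussianKernel_mul_gaussianKernel hS]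

def HasKernel (T : L2 →L[ℂ] L2) (k : ℝ → ℝ → ℝ) : Prop :=
  ∀ g : L2, ⇑(T g) =ᵐ[volume] fun x => ∫ y, (k x y : ℂ) * g y

lemma HasKernel.mul {S T : L2 →L[ℂ] L2} {k₁ k₂ k : ℝ → ℝ → ℝ} (hS : HasKernel S k₁)
    (hT : HasKernel T k₂)
    (hk : ∀ x, ∀ g : L2, ∫ y, (k₁ x y : ℂ) * ∫ z, (k₂ y z : ℂ) * g z = ∫ z, (k x z : ℂ) * g z) :
    HasKernel (S * T) k := fun g =>
  (hS (T g)).trans <| ae_of_all _ fun x =>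
    (integral_congr_ae ((hT g).mono fun y hy => by simp only [hy])).trans (hk x g)

lemma HasKernel.conj_multiplication {V P : L2 →L[ℂ] L2} {φ : ℝ → ℝ} {k : ℝ → ℝ → ℝ}
    (hV : ∀ g : L2, ⇑(V g) =ᵐ[volume] fun x => (φ x : ℂ) * g x) (hP : HasKernel P k) :
    HasKernel (V * P * V) fun x y => φ x * k x y * φ y := fun g =>
  (hV (P (V g))).trans <| (hP (V g)).mono fun x hx => by
    simp only [hx, ← integral_const_mul]
    refine integral_congr_ae ((hV g).mono fun y hy => ?_)
    simp only [hy]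
    push_cast
    ring

/-- The kernel of `exp(-(s/ω)(-½ d²/dx² + ω²x²/2))` (Mehler's formula). -/
def mehlerKernel (ω s : ℝ) : ℝ → ℝ → ℝ :=
  gaussianKernel √(ω / (2 * π * sinh s)) (ω * cosh s / (2 * sinh s)) (ω * cosh s / (2 * sinh s))
    (ω / sinh s)

lemma mehler_diag_add (ω : ℝ) {s r : ℝ} (hs : 0 < s) (hr : 0 < r) :
    ω * cosh s / (2 * sinh s) + ω * cosh r / (2 * sinh r) =
      ω * sinh (s + r) / (2 * sinh s * sinh r) := by
  have := (sinh_pos_iff.2 hs).ne'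
  have := (sinh_pos_iff.2 hr).ne'
  field_simp
  rw [sinh_add]
  ring

lemma mehler_diag_sub (ω : ℝ) {s r : ℝ} (hs : 0 < s) (hr : 0 < r) :
    ω * cosh r / (2 * sinh r) - (ω / sinh r) ^ 2 /
      (4 * (ω * cosh s / (2 * sinh s) + ω * cosh r / (2 * sinh r))) =
      ω * cosh (s + r) / (2 * sinh (s + r)) := by
  have := (sinh_pos_iff.2 hs).ne'
  have := (sinh_pos_iff.2 hr).ne'
  have := (sinh_pos_iff.2 (add_pos hs hr)).ne'
  rw [mehler_diag_add ω hs hr]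
  field_simp
  rw [sinh_add, cosh_add]
  linear_combination 4 * ω * sinh s * cosh_sq r

lemma HasKernel.mul_mehlerKernel {S T : L2 →L[ℂ] L2} {ω s r : ℝ} (hω : 0 < ω) (hs : 0 < s)
    (hr : 0 < r) (hS : HasKernel S (mehlerKernel ω s)) (hT : HasKernel T (mehlerKernel ω r)) :
    HasKernel (S * T) (mehlerKernel ω (s + r)) := by
  have hs' := sinh_pos_iff.2 hs
  have hr' := sinh_pos_iff.2 hr
  have hsr' := sinh_pos_iff.2 (add_pos hs hr)
  have hsum : 0 < ω * cosh s / (2 * sinh s) + ω * cosh r / (2 * sinh r) := by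
    have := cosh_pos s; have := cosh_pos r; positivity
  have hdiag_r := mehler_diag_sub ω hs hr
  have hdiag_s : ω * cosh s / (2 * sinh s) - (ω / sinh s) ^ 2 /
      (4 * (ω * cosh s / (2 * sinh s) + ω * cosh r / (2 * sinh r))) =
      ω * cosh (s + r) / (2 * sinh (s + r)) := by
    rw [add_comm (ω * cosh s / _), add_comm s r]
    exact mehler_diag_sub ω hr hs
  have hoff : ω / sinh s * (ω / sinh r) /
      (2 * (ω * cosh s / (2 * sinh s) + ω * cosh r / (2 * sinh r))) = ω / sinh (s + r) := by
    rw [mehler_diag_add ω hs hr]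
    field_simp
  have hconst : √(ω / (2 * π * sinh s)) * √(ω / (2 * π * sinh r)) *
      √(π / (ω * cosh s / (2 * sinh s) + ω * cosh r / (2 * sinh r))) =
      √(ω / (2 * π * sinh (s + r))) := by
    rw [← sqrt_mul (by positivity), ← sqrt_mul (by positivity), mehler_diag_add ω hs hr]
    congr 1
    field_simp
  have hpos : 0 < ω * cosh (s + r) / (2 * sinh (s + r)) := by
    have := cosh_pos (s + r); positivity
  refine hS.mul hT fun x g => ?_
  rw [mehlerKernel, mehlerKernel, integral_gaussianKernel_comp hsum (hdiag_r ▸ hpos) _ _ _ _ x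
    (Lp.memLp g), hconst, hdiag_s, hdiag_r, hoff, mehlerKernel]

lemma HasKernel.pow_mehlerKernel {T : L2 →L[ℂ] L2} {ω s : ℝ} (hω : 0 < ω) (hs : 0 < s)
    (hT : HasKernel T (mehlerKernel ω s)) {n : ℕ} (hn : 1 ≤ n) :
    HasKernel (T ^ n) (mehlerKernel ω (n * s)) := by
  induction n, hn using Nat.le_induction with
  | base => simpa using hT
  | succ n hn ih =>
    rw [pow_succ', Nat.cast_succ, add_one_mul, add_comm]
    exact hT.mul_mehlerKernel hω hs (by positivity) ih

lemma sinh_two_mul_arsinh_half (τ : ℝ) : sinh (2 * arsinh (τ / 2)) = τ * √(1 + τ ^ 2 / 4) := by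
  rw [sinh_two_mul, sinh_arsinh, cosh_arsinh, div_pow]
  ring_nf

lemma cosh_two_mul_arsinh_half (τ : ℝ) : cosh (2 * arsinh (τ / 2)) = 1 + τ ^ 2 / 2 := by
  rw [cosh_two_mul, sinh_arsinh, cosh_arsinh, sq_sqrt (by positivity)]
  ring

lemma rpow_neg_one_div_two {x : ℝ} (hx : 0 ≤ x) : x ^ (-(1 : ℝ) / 2) = (√x)⁻¹ := by
  rw [neg_div, rpow_neg hx, sqrt_eq_rpow]

lemma heatKernel_conj_eq_mehlerKernel {τ ω θ : ℝ} (hτ : 0 < τ) (hω : 0 < ω)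
    (hsinh : sinh θ = τ * ω) (hcosh : cosh θ = 1 + τ ^ 2 / 2) (x y : ℝ) :
    exp (-τ * x ^ 2 / 4) * ((2 * π * τ) ^ (-(1 : ℝ) / 2) * exp (-(x - y) ^ 2 / (2 * τ))) *
      exp (-τ * y ^ 2 / 4) = mehlerKernel ω θ x y := by
  have hexp : -τ * x ^ 2 / 4 + -(x - y) ^ 2 / (2 * τ) + -τ * y ^ 2 / 4 =
      -(ω * cosh θ / (2 * sinh θ)) * x ^ 2 - ω * cosh θ / (2 * sinh θ) * y ^ 2 +
        ω / sinh θ * x * y := by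
    rw [hsinh, hcosh]
    field_simp
    ring
  have hconst : (2 * π * τ) ^ (-(1 : ℝ) / 2) = √(ω / (2 * π * sinh θ)) := by
    rw [rpow_neg_one_div_two (by positivity), hsinh, ← sqrt_inv]
    congr 1
    field_simp
  rw [mehlerKernel, gaussianKernel, ← hexp, exp_add, exp_add, hconst]
  ring

lemma exp_two_mul_arsinh_half (τ : ℝ) :
    exp (2 * arsinh (τ / 2)) = 1 + τ * √(1 + τ ^ 2 / 4) + τ ^ 2 / 2 := by
  rw [← cosh_add_sinh, cosh_two_mul_arsinh_half, sinh_two_mul_arsinh_half]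
  ring

lemma exp_neg_two_mul_arsinh_half (τ : ℝ) :
    exp (-(2 * arsinh (τ / 2))) = 1 - τ * √(1 + τ ^ 2 / 4) + τ ^ 2 / 2 := by
  rw [← cosh_sub_sinh, cosh_two_mul_arsinh_half, sinh_two_mul_arsinh_half]
  ring

lemma wn_eq (n : ℕ) (t : ℝ) : wn n t = √(1 + (t / n) ^ 2 / 4) := by
  rw [wn]
  ring_nf

lemma pow_sub_pow_eq_two_mul_sinh (n : ℕ) (t : ℝ) (m : ℕ) :
    (1 + t / n * wn n t + t ^ 2 / (2 * (n : ℝ) ^ 2)) ^ m -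
      (1 - t / n * wn n t + t ^ 2 / (2 * (n : ℝ) ^ 2)) ^ m =
      2 * sinh (m * (2 * arsinh (t / n / 2))) := by
  have hsq : t ^ 2 / (2 * (n : ℝ) ^ 2) = (t / n) ^ 2 / 2 := by ring
  rw [wn_eq, hsq, ← exp_two_mul_arsinh_half, ← exp_neg_two_mul_arsinh_half, ← exp_nat_mul,
    ← exp_nat_mul, sinh_eq]
  ring_nf

lemma Kn_eq_mehlerKernel {n : ℕ} (hn : 1 ≤ n) {t : ℝ} (ht : 0 < t) :
    Kn n t = mehlerKernel √(1 + (t / n) ^ 2 / 4) (n * (2 * arsinh (t / n / 2))) := by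
  set τ := t / n
  set ω := √(1 + τ ^ 2 / 4)
  set θ := 2 * arsinh (τ / 2)
  have hn' : (0 : ℝ) < n := by exact_mod_cast hn
  have hτ : 0 < τ := div_pos ht hn'
  have hsinh : sinh (n * θ) ≠ 0 :=
    (sinh_pos_iff.2 (mul_pos hn' (mul_pos two_pos (arsinh_pos_iff.2 (half_pos hτ))))).ne'
  have hw : wn n t = ω := wn_eq n t
  have hab : an n t - bn n t = 2 * sinh (n * θ) := pow_sub_pow_eq_two_mul_sinh n t n
  have hab' : an' n t - bn' n t = 2 * sinh (n * θ - θ) := by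
    rw [an', bn', pow_sub_pow_eq_two_mul_sinh, Nat.cast_pred hn, sub_one_mul]
  have hcoef : -t / (4 * n) - n / (2 * t) * (1 - (an' n t - bn' n t) / (an n t - bn n t)) =
      -(ω * cosh (n * θ) / (2 * sinh (n * θ))) := by
    rw [hab, hab', sinh_sub, show sinh θ = τ * ω from sinh_two_mul_arsinh_half τ,
      cosh_two_mul_arsinh_half, show t = n * τ from (mul_div_cancel₀ t hn'.ne').symm]
    field_simp
    ring
  have hconst :
      π ^ (-(1 : ℝ) / 2) * √(ω / (2 * sinh (n * θ))) = √(ω / (2 * π * sinh (n * θ))) := by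
    rw [rpow_neg_one_div_two pi_pos.le, ← sqrt_inv, ← sqrt_mul (inv_nonneg.2 pi_pos.le)]
    congr 1
    field_simp
  ext x y
  rw [Kn, hcoef, hab, hw, hconst, mehlerKernel, gaussianKernel, mul_assoc, ← exp_add]
  congr 2
  field_simp
  ring

/-- If `Vop` is the bounded multiplication operator by `e^{-(t/n)x²/4}` on `L²(ℝ)`
(that is, `e^{-(t/n)V/2}` with `V(x) = x²/2`) and `Pop` is convolution with the heat
kernel `p_{t/n}(x) = (2π(t/n))^{-1/2} e^{-x²/(2(t/n))}` (that is, `e^{-(t/n)H₀}` with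
`H₀ = -½ d²/dx²`), then `K(t/n)^n = (Vop ∘ Pop ∘ Vop)^n` is the integral operator
with kernel `K_n(t,·,·)`. -/
theorem trotter_power_eq_integral_operator (n : ℕ) (hn : 1 ≤ n) (t : ℝ) (ht : 0 < t)
    (Vop Pop : L2 →L[ℂ] L2)
    (hV : ∀ f : L2, ⇑(Vop f) =ᵐ[volume]
      fun x : ℝ => (Real.exp (-(t / n) * x ^ 2 / 4) : ℂ) * f x)
    (hP : ∀ f : L2, ⇑(Pop f) =ᵐ[volume]
      fun x : ℝ => ∫ y : ℝ,
        (((2 * Real.pi * (t / n)) ^ (-(1 : ℝ) / 2) *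
          Real.exp (-(x - y) ^ 2 / (2 * (t / n))) : ℝ) : ℂ) * f y)
    (f : L2) :
    ⇑((((Vop * Pop * Vop)) ^ n) f) =ᵐ[volume]
      fun x : ℝ => ∫ y : ℝ, (Kn n t x y : ℂ) * f y := by
  have hτ : 0 < t / n := div_pos ht (by exact_mod_cast hn)
  have hω : 0 < √(1 + (t / n) ^ 2 / 4) := sqrt_pos.2 (by positivity)
  have hθ : 0 < 2 * arsinh (t / n / 2) := mul_pos two_pos (arsinh_pos_iff.2 (half_pos hτ))
  have hK : HasKernel (Vop * Pop * Vop)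
      (mehlerKernel √(1 + (t / n) ^ 2 / 4) (2 * arsinh (t / n / 2))) := by
    convert HasKernel.conj_multiplication hV hP using 1
    ext x y
    exact (heatKernel_conj_eq_mehlerKernel hτ hω (sinh_two_mul_arsinh_half _)
      (cosh_two_mul_arsinh_half _) x y).symm
  rw [Kn_eq_mehlerKernel hn ht]
  exact hK.pow_mehlerKernel hω hθ hn f
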